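/- arXiv:0801.1251 — 5 statements merged into one kernel-verified Lean document; each statement's English description precedes it below -/
import Mathlib

section
/- (Affine state extension) Let S be a frame stack and e an expression such that every observation symbol occurring in S or e is affine. Then for every state s with atom(S) ∪ atom(e) ⊆ atom(s), every atom a' ∉ atom(s) and every n, ⟨a'⊕s, S, e⟩↓ⁿ if and only if ⟨s, S, e⟩↓ⁿ. -/
set_option autoImplicit true

/-! ## Atoms and variables -/

abbrev Atom : Type := ℕ

/-! ## Types over a set of data type symbols -/

inductive Ty (D : Type) : Type where
  | unit : Ty D
  | prod : Ty D → Ty D → Ty D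
  | arrow : Ty D → Ty D → Ty D
  | data : D → Ty D
  | atm : Ty D
  | bnd : Ty D → Ty D

/-! ## Signatures: data types, constructors and observations -/

structure Sig : Type 1 where
  D : Type
  C : Type
  O : Type
  [finD : Fintype D]
  [finC : Fintype C]
  [finO : Fintype O]
  natD : D
  argTy : C → Ty D
  resTy : C → D
  zeroC : C
  succC : C
  zeroArg : argTy zeroC = Ty.unit
  zeroRes : resTy zeroC = natD
  succArg : argTy succC = Ty.data natD
  succRes : resTy succC = natD
  arity : O → ℕ
  obsVal : O → List Atom → List Atom → ℕ
  eqO : O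
  eqArity : arity eqO = 2
  eqSem : ∀ (s : List Atom) (a b : Atom),
    obsVal eqO s [a, b] = if a = b then 0 else 1

attribute [instance] Sig.finD Sig.finC Sig.finO

/-! ## Terms (de Bruijn representation; values are a sub-grammar cut out by `IsVal`) -/

inductive Tm (σ : Sig) : Type where
  | var : ℕ → Tm σ
  | unit : Tm σ
  | pair : Tm σ → Tm σ → Tm σ
  | fn : Tm σ → Tm σ          -- fun(f x = e); de Bruijn: var 0 = x, var 1 = f
  | con : σ.C → Tm σ → Tm σ
  | atom : Atom → Tm σ
  | bindv : Tm σ → Tm σ → Tm σ -- atom binding ⟨⟨v₁⟩⟩v₂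
  | lett : Tm σ → Tm σ → Tm σ  -- let x = e₁ in e₂; binds var 0 in e₂
  | fst : Tm σ → Tm σ
  | snd : Tm σ → Tm σ
  | app : Tm σ → Tm σ → Tm σ
  | case : Tm σ → (σ.C → Tm σ) → Tm σ -- match; each branch binds var 0
  | fresh : Tm σ
  | unbind : Tm σ → Tm σ
  | obs : (o : σ.O) → (Fin (σ.arity o) → Tm σ) → Tm σ

inductive IsVal {σ : Sig} : Tm σ → Prop where
  | var : IsVal (Tm.var n)
  | unit : IsVal Tm.unit
  | pair : IsVal v₁ → IsVal v₂ → IsVal (Tm.pair v₁ v₂)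
  | fn : IsVal (Tm.fn e)
  | con : IsVal v → IsVal (Tm.con c v)
  | atom : IsVal (Tm.atom a)
  | bindv : IsVal v₁ → IsVal v₂ → IsVal (Tm.bindv v₁ v₂)

/-! ## Renaming and substitution of variables -/

def upr (r : ℕ → ℕ) : ℕ → ℕ
  | 0 => 0
  | n + 1 => r n + 1

namespace Tm

variable {σ : Sig}

def renV : Tm σ → (ℕ → ℕ) → Tm σ
  | .var n, r => .var (r n)
  | .unit, _ => .unit
  | .pair t₁ t₂, r => .pair (renV t₁ r) (renV t₂ r)
  | .fn e, r => .fn (renV e (upr (upr r)))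
  | .con c t, r => .con c (renV t r)
  | .atom a, _ => .atom a
  | .bindv t₁ t₂, r => .bindv (renV t₁ r) (renV t₂ r)
  | .lett e₁ e₂, r => .lett (renV e₁ r) (renV e₂ (upr r))
  | .fst t, r => .fst (renV t r)
  | .snd t, r => .snd (renV t r)
  | .app t₁ t₂, r => .app (renV t₁ r) (renV t₂ r)
  | .case t br, r => .case (renV t r) (fun c => renV (br c) (upr r))
  | .fresh, _ => .fresh
  | .unbind t, r => .unbind (renV t r)
  | .obs o args, r => .obs o (fun i => renV (args i) r)

def ups (ρ : ℕ → Tm σ) : ℕ → Tm σ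
  | 0 => .var 0
  | n + 1 => renV (ρ n) Nat.succ

def subst : Tm σ → (ℕ → Tm σ) → Tm σ
  | .var n, ρ => ρ n
  | .unit, _ => .unit
  | .pair t₁ t₂, ρ => .pair (subst t₁ ρ) (subst t₂ ρ)
  | .fn e, ρ => .fn (subst e (ups (ups ρ)))
  | .con c t, ρ => .con c (subst t ρ)
  | .atom a, _ => .atom a
  | .bindv t₁ t₂, ρ => .bindv (subst t₁ ρ) (subst t₂ ρ)
  | .lett e₁ e₂, ρ => .lett (subst e₁ ρ) (subst e₂ (ups ρ))
  | .fst t, ρ => .fst (subst t ρ)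
  | .snd t, ρ => .snd (subst t ρ)
  | .app t₁ t₂, ρ => .app (subst t₁ ρ) (subst t₂ ρ)
  | .case t br, ρ => .case (subst t ρ) (fun c => subst (br c) (ups ρ))
  | .fresh, _ => .fresh
  | .unbind t, ρ => .unbind (subst t ρ)
  | .obs o args, ρ => .obs o (fun i => subst (args i) ρ)

/-- The substitution [v/x₀]. -/
def cons1 (v : Tm σ) : ℕ → Tm σ
  | 0 => v
  | n + 1 => .var n

/-- The substitution [v/x₀, f/x₁]. -/
def cons2 (v f : Tm σ) : ℕ → Tm σ
  | 0 => v
  | 1 => f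
  | n + 2 => .var n

/-- e[v/x] (single capture-avoiding substitution for the last-bound variable). -/
def subst1 (e v : Tm σ) : Tm σ := subst e (cons1 v)

/-- e[v/x, f/f'] (used for function application). -/
def subst2 (e v f : Tm σ) : Tm σ := subst e (cons2 v f)

/-! ## Atoms of a term, renaming/permuting atoms, observation symbols -/

def atoms : Tm σ → Finset Atom
  | .var _ => ∅
  | .unit => ∅
  | .pair t₁ t₂ => atoms t₁ ∪ atoms t₂
  | .fn e => atoms e
  | .con _ t => atoms t
  | .atom a => {a}
  | .bindv t₁ t₂ => atoms t₁ ∪ atoms t₂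
  | .lett e₁ e₂ => atoms e₁ ∪ atoms e₂
  | .fst t => atoms t
  | .snd t => atoms t
  | .app t₁ t₂ => atoms t₁ ∪ atoms t₂
  | .case t br => atoms t ∪ Finset.univ.biUnion (fun c => atoms (br c))
  | .fresh => ∅
  | .unbind t => atoms t
  | .obs _ args => Finset.univ.biUnion (fun i => atoms (args i))

def mapAtoms : Tm σ → (Atom → Atom) → Tm σ
  | .var n, _ => .var n
  | .unit, _ => .unit
  | .pair t₁ t₂, f => .pair (mapAtoms t₁ f) (mapAtoms t₂ f)
  | .fn e, f => .fn (mapAtoms e f)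
  | .con c t, f => .con c (mapAtoms t f)
  | .atom a, f => .atom (f a)
  | .bindv t₁ t₂, f => .bindv (mapAtoms t₁ f) (mapAtoms t₂ f)
  | .lett e₁ e₂, f => .lett (mapAtoms e₁ f) (mapAtoms e₂ f)
  | .fst t, f => .fst (mapAtoms t f)
  | .snd t, f => .snd (mapAtoms t f)
  | .app t₁ t₂, f => .app (mapAtoms t₁ f) (mapAtoms t₂ f)
  | .case t br, f => .case (mapAtoms t f) (fun c => mapAtoms (br c) f)
  | .fresh, _ => .fresh
  | .unbind t, f => .unbind (mapAtoms t f)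
  | .obs o args, f => .obs o (fun i => mapAtoms (args i) f)

/-- v[a := a'] : rename all occurrences of atom a to a'. -/
def renameAtom (t : Tm σ) (a a' : Atom) : Tm σ :=
  t.mapAtoms (fun b => if b = a then a' else b)

def obsSyms : Tm σ → Set σ.O
  | .var _ => ∅
  | .unit => ∅
  | .pair t₁ t₂ => obsSyms t₁ ∪ obsSyms t₂
  | .fn e => obsSyms e
  | .con _ t => obsSyms t
  | .atom _ => ∅
  | .bindv t₁ t₂ => obsSyms t₁ ∪ obsSyms t₂
  | .lett e₁ e₂ => obsSyms e₁ ∪ obsSyms e₂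
  | .fst t => obsSyms t
  | .snd t => obsSyms t
  | .app t₁ t₂ => obsSyms t₁ ∪ obsSyms t₂
  | .case t br => obsSyms t ∪ ⋃ c, obsSyms (br c)
  | .fresh => ∅
  | .unbind t => obsSyms t
  | .obs o args => insert o (⋃ i, obsSyms (args i))

end Tm

/-! ## Frame stacks -/

inductive Stk (σ : Sig) : Type where
  | id : Stk σ
  | cons : Stk σ → Tm σ → Stk σ  -- S∘(x.e); e binds var 0

namespace Stk

variable {σ : Sig}

def atoms : Stk σ → Finset Atom
  | .id => ∅
  | .cons S e => atoms S ∪ e.atoms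

def obsSyms : Stk σ → Set σ.O
  | .id => ∅
  | .cons S e => obsSyms S ∪ e.obsSyms

def mapAtoms : Stk σ → (Atom → Atom) → Stk σ
  | .id, _ => .id
  | .cons S e, f => .cons (mapAtoms S f) (e.mapAtoms f)

/-- S[e]: Id[e] = e, (S∘(x.e'))[e] = S[let x = e in e']. -/
def fill : Stk σ → Tm σ → Tm σ
  | .id, e => e
  | .cons S e', e => fill S (Tm.lett e e')

end Stk

/-! ## Numerals -/

def numeral (σ : Sig) : ℕ → Tm σ
  | 0 => Tm.con σ.zeroC Tm.unit
  | n + 1 => Tm.con σ.succC (numeral σ n)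

/-! ## Configurations -/

structure Config (σ : Sig) : Type where
  st : List Atom
  stk : Stk σ
  tm : Tm σ

/-! ## Typing -/

inductive HasTy (σ : Sig) : List (Ty σ.D) → Tm σ → Ty σ.D → Prop where
  | var (Γ : List (Ty σ.D)) (n : ℕ) (τ : Ty σ.D) :
      Γ[n]? = some τ → HasTy σ Γ (Tm.var n) τ
  | unit : HasTy σ Γ Tm.unit Ty.unit
  | pair : IsVal v₁ → IsVal v₂ → HasTy σ Γ v₁ τ₁ → HasTy σ Γ v₂ τ₂ →
      HasTy σ Γ (Tm.pair v₁ v₂) (Ty.prod τ₁ τ₂)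
  | fn : HasTy σ (τ :: Ty.arrow τ τ' :: Γ) e τ' →
      HasTy σ Γ (Tm.fn e) (Ty.arrow τ τ')
  | con : IsVal v → HasTy σ Γ v (σ.argTy c) →
      HasTy σ Γ (Tm.con c v) (Ty.data (σ.resTy c))
  | atom : HasTy σ Γ (Tm.atom a) Ty.atm
  | bindv : IsVal v₁ → IsVal v₂ → HasTy σ Γ v₁ Ty.atm → HasTy σ Γ v₂ τ →
      HasTy σ Γ (Tm.bindv v₁ v₂) (Ty.bnd τ)
  | lett : HasTy σ Γ e₁ τ → HasTy σ (τ :: Γ) e₂ τ' →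
      HasTy σ Γ (Tm.lett e₁ e₂) τ'
  | fst : IsVal v → HasTy σ Γ v (Ty.prod τ₁ τ₂) → HasTy σ Γ (Tm.fst v) τ₁
  | snd : IsVal v → HasTy σ Γ v (Ty.prod τ₁ τ₂) → HasTy σ Γ (Tm.snd v) τ₂
  | app : IsVal v₁ → IsVal v₂ → HasTy σ Γ v₁ (Ty.arrow τ τ') → HasTy σ Γ v₂ τ →
      HasTy σ Γ (Tm.app v₁ v₂) τ'
  | case (br : σ.C → Tm σ) : IsVal v → HasTy σ Γ v (Ty.data δ) →
      (∀ c, σ.resTy c = δ → HasTy σ (σ.argTy c :: Γ) (br c) τ) →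
      HasTy σ Γ (Tm.case v br) τ
  | fresh : HasTy σ Γ Tm.fresh Ty.atm
  | unbind : IsVal v → HasTy σ Γ v (Ty.bnd τ) →
      HasTy σ Γ (Tm.unbind v) (Ty.prod Ty.atm τ)
  | obs (o : σ.O) (args : Fin (σ.arity o) → Tm σ) :
      (∀ i, IsVal (args i)) → (∀ i, HasTy σ Γ (args i) Ty.atm) →
      HasTy σ Γ (Tm.obs o args) (Ty.data σ.natD)

inductive HasTyStk (σ : Sig) : List (Ty σ.D) → Stk σ → Ty σ.D → Ty σ.D → Prop where
  | id : HasTyStk σ Γ Stk.id τ τ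
  | cons : HasTy σ (τ :: Γ) e τ' → HasTyStk σ Γ S τ' τ'' →
      HasTyStk σ Γ (Stk.cons S e) τ τ''

/-! ## The transition relation -/

inductive Step (σ : Sig) : Config σ → Config σ → Prop where
  | pop : IsVal v →
      Step σ ⟨s, Stk.cons S e, v⟩ ⟨s, S, e.subst1 v⟩
  | lett :
      Step σ ⟨s, S, Tm.lett e₁ e₂⟩ ⟨s, Stk.cons S e₂, e₁⟩
  | case (br : σ.C → Tm σ) : IsVal v →
      Step σ ⟨s, S, Tm.case (Tm.con c v) br⟩ ⟨s, S, (br c).subst1 v⟩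
  | fst : IsVal v₁ → IsVal v₂ →
      Step σ ⟨s, S, Tm.fst (Tm.pair v₁ v₂)⟩ ⟨s, S, v₁⟩
  | snd : IsVal v₁ → IsVal v₂ →
      Step σ ⟨s, S, Tm.snd (Tm.pair v₁ v₂)⟩ ⟨s, S, v₂⟩
  | app : IsVal v →
      Step σ ⟨s, S, Tm.app (Tm.fn e) v⟩ ⟨s, S, e.subst2 v (Tm.fn e)⟩
  | fresh : a' ∉ s →
      Step σ ⟨s, S, Tm.fresh⟩ ⟨s ++ [a'], S, Tm.atom a'⟩
  | unbind : a' ∉ s → IsVal v →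
      Step σ ⟨s, S, Tm.unbind (Tm.bindv (Tm.atom a) v)⟩
             ⟨s ++ [a'], S, Tm.pair (Tm.atom a') (v.renameAtom a a')⟩
  | obs (o : σ.O) (as : Fin (σ.arity o) → Atom) :
      (∀ i, as i ∈ s) →
      Step σ ⟨s, S, Tm.obs o (fun i => Tm.atom (as i))⟩
             ⟨s, S, numeral σ (σ.obsVal o s (List.ofFn as))⟩

/-! ## Termination -/

inductive TermN (σ : Sig) : Config σ → ℕ → Prop where
  | val : IsVal v → TermN σ ⟨s, Stk.id, v⟩ 0
  | step : Step σ c c' → TermN σ c' n → TermN σ c (n + 1)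

def Term (σ : Sig) (c : Config σ) : Prop := ∃ n, TermN σ c n

/-! ## Equivariance and affineness of observations -/

def ObsEquivariant (σ : Sig) : Prop :=
  ∀ (π : Equiv.Perm Atom), {a : Atom | π a ≠ a}.Finite →
    ∀ (o : σ.O) (s as : List Atom),
      s.Nodup → as.length = σ.arity o → (∀ a ∈ as, a ∈ s) →
      σ.obsVal o s as = σ.obsVal o (s.map ⇑π) (as.map ⇑π)

def AffineObs (σ : Sig) (o : σ.O) : Prop :=
  ∀ (s : List Atom) (a' : Atom) (as : List Atom),
    s.Nodup → a' ∉ s → as.length = σ.arity o → (∀ a ∈ as, a ∈ s) →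
    σ.obsVal o (a' :: s) as = σ.obsVal o s as

/-! ## Operational equivalence of closed expressions, and contextual equivalence -/

def OpEq (σ : Sig) (w : Finset Atom) (e e' : Tm σ) (τ : Ty σ.D) : Prop :=
  e.atoms ∪ e'.atoms ⊆ w ∧ HasTy σ [] e τ ∧ HasTy σ [] e' τ ∧
  ∀ (s : List Atom) (S : Stk σ) (τ' : Ty σ.D),
    s.Nodup → w ∪ S.atoms ⊆ s.toFinset → HasTyStk σ [] S τ τ' →
    (Term σ ⟨s, S, e⟩ ↔ Term σ ⟨s, S, e'⟩)

/-- A closing substitution for context Γ with atoms in w. -/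
def ClosingSubst (σ : Sig) (Γ : List (Ty σ.D)) (w : Finset Atom) (vs : ℕ → Tm σ) : Prop :=
  ∀ i τ, Γ[i]? = some τ → IsVal (vs i) ∧ HasTy σ [] (vs i) τ ∧ (vs i).atoms ⊆ w

def CtxEq (σ : Sig) (Γ : List (Ty σ.D)) (w : Finset Atom) (e e' : Tm σ) (τ : Ty σ.D) : Prop :=
  e.atoms ∪ e'.atoms ⊆ w ∧ HasTy σ Γ e τ ∧ HasTy σ Γ e' τ ∧
  ∀ (w' : Finset Atom) (vs : ℕ → Tm σ), w ⊆ w' → ClosingSubst σ Γ w' vs →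
    OpEq σ w' (e.subst vs) (e'.subst vs) τ

/-! ## Expression relations -/

def ExprRel (σ : Sig) : Type :=
  List (Ty σ.D) → Finset Atom → Tm σ → Tm σ → Ty σ.D → Prop

def IsExprRel (σ : Sig) (R : ExprRel σ) : Prop :=
  ∀ Γ w e e' τ, R Γ w e e' τ →
    e.atoms ∪ e'.atoms ⊆ w ∧ HasTy σ Γ e τ ∧ HasTy σ Γ e' τ

/-- Compatible refinement ℰ̂ of an expression relation ℰ. -/
inductive CompRef (σ : Sig) (R : ExprRel σ) :
    List (Ty σ.D) → Finset Atom → Tm σ → Tm σ → Ty σ.D → Prop where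
  | var (Γ : List (Ty σ.D)) (n : ℕ) (τ : Ty σ.D) :
      Γ[n]? = some τ → CompRef σ R Γ w (Tm.var n) (Tm.var n) τ
  | unit : CompRef σ R Γ w Tm.unit Tm.unit Ty.unit
  | pair : IsVal v₁ → IsVal v₂ → IsVal v₁' → IsVal v₂' →
      R Γ w v₁ v₁' τ₁ → R Γ w v₂ v₂' τ₂ →
      CompRef σ R Γ w (Tm.pair v₁ v₂) (Tm.pair v₁' v₂') (Ty.prod τ₁ τ₂)
  | fn : R (τ :: Ty.arrow τ τ' :: Γ) w e e' τ' →
      CompRef σ R Γ w (Tm.fn e) (Tm.fn e') (Ty.arrow τ τ')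
  | con : IsVal v → IsVal v' → R Γ w v v' (σ.argTy c) →
      CompRef σ R Γ w (Tm.con c v) (Tm.con c v') (Ty.data (σ.resTy c))
  | atom : a ∈ w → CompRef σ R Γ w (Tm.atom a) (Tm.atom a) Ty.atm
  | bindv : IsVal v₁ → IsVal v₂ → IsVal v₁' → IsVal v₂' →
      R Γ w v₁ v₁' Ty.atm → R Γ w v₂ v₂' τ →
      CompRef σ R Γ w (Tm.bindv v₁ v₂) (Tm.bindv v₁' v₂') (Ty.bnd τ)
  | lett : R Γ w e₁ e₁' τ → R (τ :: Γ) w e₂ e₂' τ' →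
      CompRef σ R Γ w (Tm.lett e₁ e₂) (Tm.lett e₁' e₂') τ'
  | fst : IsVal v → IsVal v' → R Γ w v v' (Ty.prod τ₁ τ₂) →
      CompRef σ R Γ w (Tm.fst v) (Tm.fst v') τ₁
  | snd : IsVal v → IsVal v' → R Γ w v v' (Ty.prod τ₁ τ₂) →
      CompRef σ R Γ w (Tm.snd v) (Tm.snd v') τ₂
  | app : IsVal v₁ → IsVal v₂ → IsVal v₁' → IsVal v₂' →
      R Γ w v₁ v₁' (Ty.arrow τ τ') → R Γ w v₂ v₂' τ →
      CompRef σ R Γ w (Tm.app v₁ v₂) (Tm.app v₁' v₂') τ'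
  | case (br br' : σ.C → Tm σ) : IsVal v → IsVal v' → R Γ w v v' (Ty.data δ) →
      (∀ c, σ.resTy c = δ → R (σ.argTy c :: Γ) w (br c) (br' c) τ) →
      CompRef σ R Γ w (Tm.case v br) (Tm.case v' br') τ
  | fresh : CompRef σ R Γ w Tm.fresh Tm.fresh Ty.atm
  | unbind : IsVal v → IsVal v' → R Γ w v v' (Ty.bnd τ) →
      CompRef σ R Γ w (Tm.unbind v) (Tm.unbind v') (Ty.prod Ty.atm τ)
  | obs (o : σ.O) (args args' : Fin (σ.arity o) → Tm σ) :
      (∀ i, IsVal (args i)) → (∀ i, IsVal (args' i)) →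
      (∀ i, R Γ w (args i) (args' i) Ty.atm) →
      CompRef σ R Γ w (Tm.obs o args) (Tm.obs o args') (Ty.data σ.natD)

/-- Compatible refinement extended to frame stacks. -/
inductive StkRef (σ : Sig) (R : ExprRel σ) :
    List (Ty σ.D) → Finset Atom → Stk σ → Stk σ → Ty σ.D → Ty σ.D → Prop where
  | id : StkRef σ R Γ w Stk.id Stk.id τ τ
  | cons : R (τ :: Γ) w e e' τ' → StkRef σ R Γ w S S' τ' τ'' →
      StkRef σ R Γ w (Stk.cons S e) (Stk.cons S' e') τ τ''

/-! ## Properties of expression relations -/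

def RelRefl (σ : Sig) (R : ExprRel σ) : Prop :=
  ∀ Γ w (e : Tm σ) τ, e.atoms ⊆ w → HasTy σ Γ e τ → R Γ w e e τ

def RelSymm (σ : Sig) (R : ExprRel σ) : Prop :=
  ∀ Γ w e e' τ, R Γ w e e' τ → R Γ w e' e τ

def RelTrans (σ : Sig) (R : ExprRel σ) : Prop :=
  ∀ Γ w e e' e'' τ, R Γ w e e' τ → R Γ w e' e'' τ → R Γ w e e'' τ

def RelCompat (σ : Sig) (R : ExprRel σ) : Prop :=
  ∀ Γ w e e' τ, CompRef σ R Γ w e e' τ → R Γ w e e' τ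

def RelSubst (σ : Sig) (R : ExprRel σ) : Prop :=
  ∀ Γ w (v v' : Tm σ) τ e e' τ', IsVal v → IsVal v' →
    R Γ w v v' τ → R (τ :: Γ) w e e' τ' →
    R Γ w (e.subst1 v) (e'.subst1 v') τ'

def RelEquivariant (σ : Sig) (R : ExprRel σ) : Prop :=
  ∀ (π : Equiv.Perm Atom), {a : Atom | π a ≠ a}.Finite →
    ∀ Γ w (e e' : Tm σ) τ, R Γ w e e' τ →
      R Γ (w.image ⇑π) (e.mapAtoms ⇑π) (e'.mapAtoms ⇑π) τ

def RelAdequate (σ : Sig) (R : ExprRel σ) : Prop :=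
  ∀ w e e' τ, R [] w e e' τ → OpEq σ w e e' τ

/-! ## The Howe relation (least relation closed under the Howe rule) -/

def Howe (σ : Sig) : ExprRel σ := fun Γ w e e'' τ =>
  ∀ R : ExprRel σ,
    (∀ Γ' w' a c τ',
      (∃ b, CompRef σ R Γ' w' a b τ' ∧ CtxEq σ Γ' w' b c τ') → R Γ' w' a c τ') →
    R Γ w e e'' τ

/-! ## Nominal arities and α-equivalence -/

inductive NominalArity (σ : Sig) : Ty σ.D → Prop where
  | unit : NominalArity σ Ty.unit
  | prod : NominalArity σ t₁ → NominalArity σ t₂ → NominalArity σ (Ty.prod t₁ t₂)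
  | data (d : σ.D) : NominalArity σ (Ty.data d)
  | atm : NominalArity σ Ty.atm
  | bnd : NominalArity σ t → NominalArity σ (Ty.bnd t)

inductive AlphaEq (σ : Sig) : Finset Atom → Tm σ → Tm σ → Ty σ.D → Prop where
  | unit : AlphaEq σ w Tm.unit Tm.unit Ty.unit
  | pair : AlphaEq σ w v₁ v₁' a₁ → AlphaEq σ w v₂ v₂' a₂ →
      AlphaEq σ w (Tm.pair v₁ v₂) (Tm.pair v₁' v₂') (Ty.prod a₁ a₂)
  | con : AlphaEq σ w v v' (σ.argTy c) →
      AlphaEq σ w (Tm.con c v) (Tm.con c v') (Ty.data (σ.resTy c))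
  | atom : a ∈ w → AlphaEq σ w (Tm.atom a) (Tm.atom a) Ty.atm
  | bindv (a a' a'' : Atom) (v v' : Tm σ) : a'' ∉ w →
      insert a (insert a' (v.atoms ∪ v'.atoms)) ⊆ w →
      AlphaEq σ (insert a'' w) (v.renameAtom a a'') (v'.renameAtom a' a'') ar →
      AlphaEq σ w (Tm.bindv (Tm.atom a) v) (Tm.bindv (Tm.atom a') v') (Ty.bnd ar)

/-! ## Well-typed configurations -/

def ConfigTy (σ : Sig) (w : Finset Atom) (c : Config σ) (τ : Ty σ.D) : Prop :=
  c.st.Nodup ∧ c.stk.atoms ∪ c.tm.atoms ⊆ c.st.toFinset ∧ c.st.toFinset = w ∧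
  ∃ τ', HasTyStk σ [] c.stk τ' τ ∧ HasTy σ [] c.tm τ'

/-!
Prepending `a'` to the state is visible to a computation in only two ways. Observations read the
state, but they are affine, so their values do not change. Fresh-atom generation can no longer pick
`a'`. Hence every step from `a' :: s` is a step from `s`. Conversely, a step from `s` is a step from
`a' :: s` unless it picks `a'` as its fresh atom. In that case, by equivariance, swapping `a'` with
an atom `b` that has not been used gives a run that picks `b` instead. The swap fixes `s` and every
atom of `S` and `e`. The hypotheses (the state has no repeated atoms, it contains every atom of the
configuration, and every observation symbol of the configuration is affine) are preserved by steps,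
so induction on `n` finishes the proof.
-/

theorem Equiv.finite_setOf_swap_apply_ne {α : Type*} [DecidableEq α] (a b : α) :
    {x | Equiv.swap a b x ≠ x}.Finite :=
  (Set.toFinite {a, b}).subset fun x hx => by
    by_contra hab
    simp only [Set.mem_insert_iff, Set.mem_singleton_iff, not_or] at hab
    exact hx (Equiv.swap_apply_of_ne_of_ne hab.1 hab.2)

namespace Tm

variable {σ : Sig}

theorem isVal_mapAtoms {t : Tm σ} (h : IsVal t) (f : Atom → Atom) : IsVal (t.mapAtoms f) := by
  induction h <;> constructor <;> assumption

theorem mapAtoms_renV (t : Tm σ) (r : ℕ → ℕ) (f : Atom → Atom) :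
    (t.renV r).mapAtoms f = (t.mapAtoms f).renV r := by
  induction t generalizing r <;> simp [renV, mapAtoms, *]

theorem mapAtoms_subst (t : Tm σ) (ρ : ℕ → Tm σ) (f : Atom → Atom) :
    (t.subst ρ).mapAtoms f = (t.mapAtoms f).subst (fun n => (ρ n).mapAtoms f) := by
  have ups_mapAtoms (ρ : ℕ → Tm σ) :
      (fun n => (ups ρ n).mapAtoms f) = ups (fun n => (ρ n).mapAtoms f) := by
    funext n; cases n <;> simp [ups, mapAtoms, mapAtoms_renV]
  induction t generalizing ρ <;> simp [subst, mapAtoms, *]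

theorem mapAtoms_subst1 (e v : Tm σ) (f : Atom → Atom) :
    (e.subst1 v).mapAtoms f = (e.mapAtoms f).subst1 (v.mapAtoms f) := by
  rw [subst1, subst1, mapAtoms_subst]
  congr 1; funext n; cases n <;> rfl

theorem mapAtoms_subst2 (e v g : Tm σ) (f : Atom → Atom) :
    (e.subst2 v g).mapAtoms f = (e.mapAtoms f).subst2 (v.mapAtoms f) (g.mapAtoms f) := by
  rw [subst2, subst2, mapAtoms_subst]
  congr 1; funext n; rcases n with _ | _ | n <;> rfl

theorem mapAtoms_mapAtoms (t : Tm σ) (f g : Atom → Atom) :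
    (t.mapAtoms f).mapAtoms g = t.mapAtoms (g ∘ f) := by
  induction t <;> simp [mapAtoms, *]

theorem mapAtoms_renameAtom (v : Tm σ) (a a' : Atom) {π : Atom → Atom}
    (hπ : Function.Injective π) :
    (v.renameAtom a a').mapAtoms π = (v.mapAtoms π).renameAtom (π a) (π a') := by
  simp only [renameAtom, mapAtoms_mapAtoms]
  congr 1; funext b
  simp [hπ.eq_iff, apply_ite π]

theorem mapAtoms_eq_self {f : Atom → Atom} {t : Tm σ} (h : ∀ a ∈ t.atoms, f a = a) :
    t.mapAtoms f = t := by
  induction t with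
  | case t br iht ihbr =>
    simp only [atoms, Finset.mem_union, Finset.mem_biUnion] at h
    rw [mapAtoms, iht fun a ha => h a (.inl ha)]
    exact congrArg _ (funext fun c => ihbr c fun a ha => h a (.inr ⟨c, by simp, ha⟩))
  | obs o args ih =>
    simp_all only [mapAtoms, atoms, Finset.mem_biUnion]
    exact congrArg _ (funext fun i => ih i fun a ha => h a ⟨i, by simp, ha⟩)
  | _ => simp_all [mapAtoms, atoms]

theorem atoms_mapAtoms (t : Tm σ) (f : Atom → Atom) :
    (t.mapAtoms f).atoms = t.atoms.image f := by
  induction t <;> simp [mapAtoms, atoms, Finset.image_union, Finset.biUnion_image, *]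

theorem obsSyms_mapAtoms (t : Tm σ) (f : Atom → Atom) : (t.mapAtoms f).obsSyms = t.obsSyms := by
  induction t <;> simp [mapAtoms, obsSyms, *]

theorem atoms_renV (t : Tm σ) (r : ℕ → ℕ) : (t.renV r).atoms = t.atoms := by
  induction t generalizing r <;> simp [renV, atoms, *]

theorem atoms_subst_subset {Y : Finset Atom} {t : Tm σ} {ρ : ℕ → Tm σ}
    (ht : t.atoms ⊆ Y) (hρ : ∀ n, (ρ n).atoms ⊆ Y) : (t.subst ρ).atoms ⊆ Y := by
  have ups_subset {ρ : ℕ → Tm σ} (hρ : ∀ n, (ρ n).atoms ⊆ Y) n :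
      (ups ρ n).atoms ⊆ Y := by
    cases n <;> simp [ups, atoms, atoms_renV, hρ]
  induction t generalizing ρ with
  | fn e ih => exact ih ht (ups_subset (ups_subset hρ))
  | _ => simp_all [subst, atoms, Finset.union_subset_iff]

theorem obsSyms_renV (t : Tm σ) (r : ℕ → ℕ) : (t.renV r).obsSyms = t.obsSyms := by
  induction t generalizing r <;> simp [renV, obsSyms, *]

theorem obsSyms_subst_subset {Y : Set σ.O} {t : Tm σ} {ρ : ℕ → Tm σ}
    (ht : t.obsSyms ⊆ Y) (hρ : ∀ n, (ρ n).obsSyms ⊆ Y) : (t.subst ρ).obsSyms ⊆ Y := by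
  have ups_subset {ρ : ℕ → Tm σ} (hρ : ∀ n, (ρ n).obsSyms ⊆ Y) n :
      (ups ρ n).obsSyms ⊆ Y := by
    cases n <;> simp [ups, obsSyms, obsSyms_renV, hρ]
  induction t generalizing ρ with
  | fn e ih => exact ih ht (ups_subset (ups_subset hρ))
  | _ => simp_all [subst, obsSyms, Set.union_subset_iff, Set.insert_subset_iff]

theorem atoms_subst1_subset {Y : Finset Atom} {e v : Tm σ} (he : e.atoms ⊆ Y)
    (hv : v.atoms ⊆ Y) : (e.subst1 v).atoms ⊆ Y :=
  atoms_subst_subset he fun n => by cases n <;> simp [cons1, atoms, hv]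

theorem atoms_subst2_subset {Y : Finset Atom} {e v g : Tm σ} (he : e.atoms ⊆ Y)
    (hv : v.atoms ⊆ Y) (hg : g.atoms ⊆ Y) : (e.subst2 v g).atoms ⊆ Y :=
  atoms_subst_subset he fun n => by rcases n with _ | _ | n <;> simp [cons2, atoms, hv, hg]

theorem obsSyms_subst1_subset {Y : Set σ.O} {e v : Tm σ} (he : e.obsSyms ⊆ Y)
    (hv : v.obsSyms ⊆ Y) : (e.subst1 v).obsSyms ⊆ Y :=
  obsSyms_subst_subset he fun n => by cases n <;> simp [cons1, obsSyms, hv]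

theorem obsSyms_subst2_subset {Y : Set σ.O} {e v g : Tm σ} (he : e.obsSyms ⊆ Y)
    (hv : v.obsSyms ⊆ Y) (hg : g.obsSyms ⊆ Y) : (e.subst2 v g).obsSyms ⊆ Y :=
  obsSyms_subst_subset he fun n => by rcases n with _ | _ | n <;> simp [cons2, obsSyms, hv, hg]

theorem atoms_renameAtom_subset {Y : Finset Atom} {v : Tm σ} (a : Atom) {a' : Atom}
    (hv : v.atoms ⊆ Y) (ha' : a' ∈ Y) : (v.renameAtom a a').atoms ⊆ Y := by
  rw [renameAtom, atoms_mapAtoms, Finset.image_subset_iff]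
  intro b hb
  split_ifs
  · exact ha'
  · exact hv hb

theorem obsSyms_renameAtom (v : Tm σ) (a a' : Atom) : (v.renameAtom a a').obsSyms = v.obsSyms :=
  obsSyms_mapAtoms v _

end Tm

theorem atoms_numeral {σ : Sig} (m : ℕ) : (numeral σ m).atoms = ∅ := by
  induction m <;> simp [numeral, Tm.atoms, *]

theorem obsSyms_numeral {σ : Sig} (m : ℕ) : (numeral σ m).obsSyms = ∅ := by
  induction m <;> simp [numeral, Tm.obsSyms, *]

theorem mapAtoms_numeral {σ : Sig} (m : ℕ) (f : Atom → Atom) :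
    (numeral σ m).mapAtoms f = numeral σ m := by
  induction m <;> simp [numeral, Tm.mapAtoms, *]

theorem Stk.mapAtoms_eq_self {σ : Sig} {f : Atom → Atom} {S : Stk σ}
    (h : ∀ a ∈ S.atoms, f a = a) : S.mapAtoms f = S := by
  induction S with
  | id => rfl
  | cons S e ih =>
    simp only [atoms, Finset.mem_union] at h
    rw [mapAtoms, ih fun a ha => h a (.inl ha), Tm.mapAtoms_eq_self fun a ha => h a (.inr ha)]

namespace Config

variable {σ : Sig}

def atoms (c : Config σ) : Finset Atom := c.stk.atoms ∪ c.tm.atoms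

def obsSyms (c : Config σ) : Set σ.O := c.stk.obsSyms ∪ c.tm.obsSyms

def mapAtoms (c : Config σ) (f : Atom → Atom) : Config σ :=
  ⟨c.st.map f, c.stk.mapAtoms f, c.tm.mapAtoms f⟩

theorem mapAtoms_eq_self {c : Config σ} {f : Atom → Atom} (hf : ∀ a ∈ c.st, f a = a)
    (hc : c.atoms ⊆ c.st.toFinset) : c.mapAtoms f = c := by
  have hfix : ∀ a ∈ c.atoms, f a = a := fun a ha => hf a (List.mem_toFinset.1 (hc ha))
  simp only [atoms, Finset.mem_union] at hfix
  rw [mapAtoms, List.map_congr_left hf, List.map_id',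
    Stk.mapAtoms_eq_self fun a ha => hfix a (.inl ha),
    Tm.mapAtoms_eq_self fun a ha => hfix a (.inr ha)]

end Config

theorem AffineObs.obsVal_cons {σ : Sig} {o : σ.O} (ho : AffineObs σ o) {s : List Atom}
    (hs : s.Nodup) {a : Atom} (ha : a ∉ s) {as : Fin (σ.arity o) → Atom} (has : ∀ i, as i ∈ s) :
    σ.obsVal o (a :: s) (List.ofFn as) = σ.obsVal o s (List.ofFn as) :=
  ho s a _ hs ha (by simp) (by simpa using has)

namespace Step

variable {σ : Sig} {c c' : Config σ}

theorem st_nodup (h : Step σ c c') (hc : c.st.Nodup) : c'.st.Nodup := by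
  cases h <;> simp_all [List.nodup_append] <;> exact fun b hb hba => by simp_all

theorem atoms_subset_st (h : Step σ c c') (hc : c.atoms ⊆ c.st.toFinset) :
    c'.atoms ⊆ c'.st.toFinset := by
  cases h <;>
    simp_all [Config.atoms, Stk.atoms, Tm.atoms, Finset.union_subset_iff, Finset.insert_subset_iff,
      Tm.atoms_subst1_subset, atoms_numeral]
  case app => exact Tm.atoms_subst2_subset hc.2.1 hc.2.2 hc.2.1
  case fresh => exact hc.trans (Finset.subset_insert _ _)
  case unbind s b _ _ _ _ _ =>
    have hs := Finset.subset_insert b s.toFinset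
    exact ⟨hc.2.1.trans hs,
      Tm.atoms_renameAtom_subset _ (hc.2.2.trans hs) (Finset.mem_insert_self _ _)⟩

theorem obsSyms_subset (h : Step σ c c') : c'.obsSyms ⊆ c.obsSyms := by
  suffices ∀ Y, c.obsSyms ⊆ Y → c'.obsSyms ⊆ Y from this _ subset_rfl
  intro Y hY
  cases h <;>
    simp_all [Config.obsSyms, Stk.obsSyms, Tm.obsSyms, Set.union_subset_iff, Set.insert_subset_iff,
      Tm.obsSyms_subst1_subset, Tm.obsSyms_renameAtom, obsSyms_numeral]
  case app => exact Tm.obsSyms_subst2_subset hY.2.1 hY.2.2 hY.2.1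

theorem mapAtoms (hequiv : ObsEquivariant σ) {π : Equiv.Perm Atom}
    (hπ : {a | π a ≠ a}.Finite) (hc : c.st.Nodup) (h : Step σ c c') :
    Step σ (c.mapAtoms π) (c'.mapAtoms π) := by
  have hv {v : Tm σ} (h : IsVal v) := Tm.isVal_mapAtoms h π
  cases h with
  | pop h => simpa [Config.mapAtoms, Stk.mapAtoms, Tm.mapAtoms_subst1] using pop (hv h)
  | lett => exact lett
  | case br h => simpa [Config.mapAtoms, Tm.mapAtoms, Tm.mapAtoms_subst1] using case _ (hv h)
  | fst h₁ h₂ => exact fst (hv h₁) (hv h₂)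
  | snd h₁ h₂ => exact snd (hv h₁) (hv h₂)
  | app h => simpa [Config.mapAtoms, Tm.mapAtoms, Tm.mapAtoms_subst2] using app (hv h)
  | fresh hb => simpa [Config.mapAtoms, Tm.mapAtoms] using fresh (by simpa using hb)
  | unbind hb h =>
    simpa [Config.mapAtoms, Tm.mapAtoms, Tm.mapAtoms_renameAtom _ _ _ π.injective] using
      unbind (by simpa using hb) (hv h)
  | @obs s _ o as has =>
    have has' : ∀ a ∈ List.ofFn as, a ∈ s := by simpa using has
    rw [Config.mapAtoms, Config.mapAtoms, Tm.mapAtoms, mapAtoms_numeral,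
      hequiv π hπ o _ _ hc (by simp) has', List.map_ofFn]
    exact obs o _ fun i => List.mem_map_of_mem (has i)

theorem cons_st {a : Atom} {s : List Atom} {S : Stk σ} {e : Tm σ} (h : Step σ ⟨s, S, e⟩ c')
    (hs : s.Nodup) (ha : a ∉ c'.st) (haff : ∀ o ∈ e.obsSyms, AffineObs σ o) :
    Step σ ⟨a :: s, S, e⟩ ⟨a :: c'.st, c'.stk, c'.tm⟩ := by
  cases h with
  | pop h => exact pop h
  | lett => exact lett
  | case br h => exact case br h
  | fst h₁ h₂ => exact fst h₁ h₂
  | snd h₁ h₂ => exact snd h₁ h₂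
  | app h => exact app h
  | fresh hb => exact fresh (by simp_all [eq_comm])
  | unbind hb h => exact unbind (by simp_all [eq_comm]) h
  | obs o as has =>
    rw [← (haff o (by simp [Tm.obsSyms])).obsVal_cons hs ha has]
    exact obs o as fun i => List.mem_cons_of_mem a (has i)

theorem exists_of_cons_st {a : Atom} {s : List Atom} {S : Stk σ} {e : Tm σ} {d : Config σ}
    (h : Step σ ⟨a :: s, S, e⟩ d) (hs : s.Nodup) (ha : a ∉ s) (he : e.atoms ⊆ s.toFinset)
    (haff : ∀ o ∈ e.obsSyms, AffineObs σ o) :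
    ∃ c', Step σ ⟨s, S, e⟩ c' ∧ d = ⟨a :: c'.st, c'.stk, c'.tm⟩ := by
  cases h with
  | pop h => exact ⟨_, pop h, rfl⟩
  | lett => exact ⟨_, lett, rfl⟩
  | case br h => exact ⟨_, case br h, rfl⟩
  | fst h₁ h₂ => exact ⟨_, fst h₁ h₂, rfl⟩
  | snd h₁ h₂ => exact ⟨_, snd h₁ h₂, rfl⟩
  | app h => exact ⟨_, app h, rfl⟩
  | fresh hb => exact ⟨_, fresh (by simp_all), rfl⟩
  | unbind hb h => exact ⟨_, unbind (by simp_all) h, rfl⟩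
  | obs o as _ =>
    have has : ∀ i, as i ∈ s := fun i => List.mem_toFinset.1 (he (by simp [Tm.atoms]))
    rw [(haff o (by simp [Tm.obsSyms])).obsVal_cons hs ha has]
    exact ⟨_, obs o as has, rfl⟩

end Step

theorem TermN.mapAtoms {σ : Sig} (hequiv : ObsEquivariant σ) {π : Equiv.Perm Atom}
    (hπ : {a | π a ≠ a}.Finite) {c : Config σ} {n : ℕ} (h : TermN σ c n) (hc : c.st.Nodup) :
    TermN σ (c.mapAtoms π) n := by
  induction h with
  | val h => exact val (Tm.isVal_mapAtoms h π)
  | step h _ ih => exact step (h.mapAtoms hequiv hπ hc) (ih (h.st_nodup hc))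

theorem Step.exists_avoiding {σ : Sig} (hequiv : ObsEquivariant σ) {c c' : Config σ} {n : ℕ}
    (h : Step σ c c') (ht : TermN σ c' n) (hc : c.st.Nodup) (hca : c.atoms ⊆ c.st.toFinset)
    {a : Atom} (ha : a ∉ c.st) : ∃ c'', Step σ c c'' ∧ a ∉ c''.st ∧ TermN σ c'' n := by
  -- `swap a b` with `b` unused fixes `c` and renames a fresh atom `a` chosen by the step to `b`.
  obtain ⟨b, hb⟩ := Infinite.exists_notMem_finset (c.st ++ c'.st).toFinset
  simp only [List.mem_toFinset, List.mem_append, not_or] at hb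
  have hπ := Equiv.finite_setOf_swap_apply_ne a b
  have hfix : c.mapAtoms (Equiv.swap a b) = c := Config.mapAtoms_eq_self
    (fun x hx => Equiv.swap_apply_of_ne_of_ne (ne_of_mem_of_not_mem hx ha)
      (ne_of_mem_of_not_mem hx hb.1)) hca
  refine ⟨c'.mapAtoms (Equiv.swap a b), hfix ▸ h.mapAtoms hequiv hπ hc, ?_,
    ht.mapAtoms hequiv hπ (h.st_nodup hc)⟩
  simp [Config.mapAtoms, Equiv.swap_apply_eq_iff, hb.2]

theorem termN_zero_iff {σ : Sig} {c : Config σ} :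
    TermN σ c 0 ↔ c.stk = .id ∧ IsVal c.tm := by
  constructor
  · rintro ⟨hv⟩
    exact ⟨rfl, hv⟩
  · obtain ⟨s, S, e⟩ := c
    rintro ⟨rfl, hv⟩
    exact .val hv

theorem termN_cons_st_iff {σ : Sig} (hequiv : ObsEquivariant σ) {a : Atom} {n : ℕ}
    {c : Config σ} (hc : c.st.Nodup) (hca : c.atoms ⊆ c.st.toFinset)
    (haff : ∀ o ∈ c.obsSyms, AffineObs σ o) (ha : a ∉ c.st) :
    TermN σ ⟨a :: c.st, c.stk, c.tm⟩ n ↔ TermN σ c n := by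
  induction n generalizing c with
  | zero => rw [termN_zero_iff, termN_zero_iff]
  | succ n ih =>
    obtain ⟨s, S, e⟩ := c
    have ih_step {c'} (h : Step σ ⟨s, S, e⟩ c') :=
      ih (h.st_nodup hc) (h.atoms_subset_st hca) fun o ho => haff o (h.obsSyms_subset ho)
    have haff_e : ∀ o ∈ e.obsSyms, AffineObs σ o := fun o ho => haff o (.inr ho)
    constructor
    · rintro (_ | ⟨h, ht⟩)
      obtain ⟨c', h', rfl⟩ := h.exists_of_cons_st hc ha (Finset.union_subset_right hca) haff_e
      have ha' : a ∉ c'.st := (List.nodup_cons.1 (h.st_nodup (hc.cons ha))).1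
      exact .step h' ((ih_step h' ha').1 ht)
    · rintro (_ | ⟨h, ht⟩)
      obtain ⟨c'', h'', ha'', ht''⟩ := h.exists_avoiding hequiv ht hc hca ha
      exact .step (h''.cons_st hc ha'' haff_e) ((ih_step h'' ha'').2 ht'')

/-- Affine state extension. -/
theorem affine_state_extension (σ : Sig) (hequiv : ObsEquivariant σ)
    (S : Stk σ) (e : Tm σ)
    (haff : ∀ o : σ.O, o ∈ S.obsSyms ∪ e.obsSyms → AffineObs σ o)
    (s : List Atom) (hnd : s.Nodup)
    (hat : S.atoms ∪ e.atoms ⊆ s.toFinset)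
    (a' : Atom) (ha' : a' ∉ s) (n : ℕ) :
    TermN σ ⟨a' :: s, S, e⟩ n ↔ TermN σ ⟨s, S, e⟩ n :=
  termN_cons_st_iff (c := ⟨s, S, e⟩) hequiv hnd hat haff ha'
end

section
/- (Extensionality at product types) For all types τ₁, τ₂, worlds w, and closed well-typed values v₁, v₂, v₁', v₂' with atoms in w: ⊢_w (v₁,v₂) ≅ (v₁',v₂') : τ₁*τ₂ if and only if ⊢_w v₁ ≅ v₁' : τ₁ and ⊢_w v₂ ≅ v₂' : τ₂. -/
set_option autoImplicit true

/-! ## Auxiliary lemmas for ext_prod -/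

section Aux
variable {σ : Sig}

lemma Tm.ups_var : Tm.ups (σ := σ) Tm.var = Tm.var :=
  funext fun n => by cases n <;> rfl

lemma Tm.subst_var (t : Tm σ) : t.subst Tm.var = t := by
  induction t <;> simp [Tm.subst, Tm.ups_var, *]

lemma Tm.ups_comp_upr (ρ : ℕ → Tm σ) (r : ℕ → ℕ) :
    Tm.ups ρ ∘ upr r = Tm.ups (ρ ∘ r) :=
  funext fun n => by cases n <;> rfl

lemma Tm.subst_renV (t : Tm σ) : ∀ (r : ℕ → ℕ) (ρ : ℕ → Tm σ),
    (t.renV r).subst ρ = t.subst (ρ ∘ r) := by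
  induction t <;> intro r ρ <;>
    simp [Tm.renV, Tm.subst, ← Tm.ups_comp_upr, *]

lemma Tm.subst_renV_succ (t v : Tm σ) :
    (t.renV Nat.succ).subst (Tm.cons1 v) = t := by
  rw [Tm.subst_renV]
  have h : (Tm.cons1 v ∘ Nat.succ) = Tm.var (σ := σ) := funext fun n => rfl
  rw [h, Tm.subst_var]

lemma isVal_renV {v : Tm σ} (h : IsVal v) (r : ℕ → ℕ) : IsVal (v.renV r) := by
  induction h <;> simp only [Tm.renV] <;> constructor <;> assumption

lemma atoms_renV (t : Tm σ) : ∀ r, (t.renV r).atoms = t.atoms := by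
  induction t <;> intro r <;> simp [Tm.renV, Tm.atoms, *]

lemma upr_ok {Γ Δ : List (Ty σ.D)} {r : ℕ → ℕ}
    (h : ∀ n τ', Γ[n]? = some τ' → Δ[r n]? = some τ') (τ₀ : Ty σ.D) :
    ∀ n τ', (τ₀ :: Γ)[n]? = some τ' → (τ₀ :: Δ)[upr r n]? = some τ' := by
  intro n τ' hn
  cases n with
  | zero =>
      simp only [List.getElem?_cons_zero, Option.some.injEq] at hn
      subst hn
      simp [upr]
  | succ m =>
      simp only [List.getElem?_cons_succ] at hn
      simpa [upr, List.getElem?_cons_succ] using h m τ' hn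

lemma hasTy_renV {Γ : List (Ty σ.D)} {e : Tm σ} {τ : Ty σ.D}
    (h : HasTy σ Γ e τ) :
    ∀ (Δ : List (Ty σ.D)) (r : ℕ → ℕ),
      (∀ n τ', Γ[n]? = some τ' → Δ[r n]? = some τ') →
      HasTy σ Δ (e.renV r) τ := by
  induction h with
  | var Γ n τ hg => intro Δ r hr; exact HasTy.var Δ (r n) τ (hr n τ hg)
  | unit => intro Δ r hr; exact HasTy.unit
  | pair hv₁ hv₂ h₁ h₂ ih₁ ih₂ =>
      intro Δ r hr
      exact HasTy.pair (isVal_renV hv₁ r) (isVal_renV hv₂ r) (ih₁ Δ r hr) (ih₂ Δ r hr)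
  | fn h ih =>
      intro Δ r hr
      exact HasTy.fn (ih _ _ (upr_ok (upr_ok hr _) _))
  | con hv h ih =>
      intro Δ r hr
      exact HasTy.con (isVal_renV hv r) (ih Δ r hr)
  | atom => intro Δ r hr; exact HasTy.atom
  | bindv hv₁ hv₂ h₁ h₂ ih₁ ih₂ =>
      intro Δ r hr
      exact HasTy.bindv (isVal_renV hv₁ r) (isVal_renV hv₂ r) (ih₁ Δ r hr) (ih₂ Δ r hr)
  | lett h₁ h₂ ih₁ ih₂ =>
      intro Δ r hr
      exact HasTy.lett (ih₁ Δ r hr) (ih₂ _ _ (upr_ok hr _))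
  | fst hv h ih =>
      intro Δ r hr
      exact HasTy.fst (isVal_renV hv r) (ih Δ r hr)
  | snd hv h ih =>
      intro Δ r hr
      exact HasTy.snd (isVal_renV hv r) (ih Δ r hr)
  | app hv₁ hv₂ h₁ h₂ ih₁ ih₂ =>
      intro Δ r hr
      exact HasTy.app (isVal_renV hv₁ r) (isVal_renV hv₂ r) (ih₁ Δ r hr) (ih₂ Δ r hr)
  | case br hv h hbr ih ihbr =>
      intro Δ r hr
      exact HasTy.case _ (isVal_renV hv r) (ih Δ r hr)
        (fun c hc => ihbr c hc _ _ (upr_ok hr _))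
  | fresh => intro Δ r hr; exact HasTy.fresh
  | unbind hv h ih =>
      intro Δ r hr
      exact HasTy.unbind (isVal_renV hv r) (ih Δ r hr)
  | obs o args hv h ih =>
      intro Δ r hr
      exact HasTy.obs o _ (fun i => isVal_renV (hv i) r) (fun i => ih i Δ r hr)

lemma term_pop {s : List Atom} {S : Stk σ} {e v : Tm σ} (hv : IsVal v) :
    Term σ ⟨s, Stk.cons S e, v⟩ ↔ Term σ ⟨s, S, e.subst1 v⟩ := by
  constructor
  · rintro ⟨n, h⟩
    cases h with
    | step hst ht =>
        cases hst with
        | pop => exact ⟨_, ht⟩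
        | lett => cases hv
        | case => cases hv
        | fst => cases hv
        | snd => cases hv
        | app => cases hv
        | fresh => cases hv
        | unbind => cases hv
        | obs => cases hv
  · rintro ⟨n, h⟩
    exact ⟨n + 1, TermN.step (Step.pop hv) h⟩

lemma term_fst {s : List Atom} {S : Stk σ} {v₁ v₂ : Tm σ}
    (h₁ : IsVal v₁) (h₂ : IsVal v₂) :
    Term σ ⟨s, S, Tm.fst (Tm.pair v₁ v₂)⟩ ↔ Term σ ⟨s, S, v₁⟩ := by
  constructor
  · rintro ⟨n, h⟩
    cases h with
    | val hv => cases hv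
    | step hst ht =>
        cases hst with
        | pop hv => cases hv
        | fst => exact ⟨_, ht⟩
  · rintro ⟨n, h⟩
    exact ⟨n + 1, TermN.step (Step.fst h₁ h₂) h⟩

lemma term_snd {s : List Atom} {S : Stk σ} {v₁ v₂ : Tm σ}
    (h₁ : IsVal v₁) (h₂ : IsVal v₂) :
    Term σ ⟨s, S, Tm.snd (Tm.pair v₁ v₂)⟩ ↔ Term σ ⟨s, S, v₂⟩ := by
  constructor
  · rintro ⟨n, h⟩
    cases h with
    | val hv => cases hv
    | step hst ht =>
        cases hst with
        | pop hv => cases hv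
        | snd => exact ⟨_, ht⟩
  · rintro ⟨n, h⟩
    exact ⟨n + 1, TermN.step (Step.snd h₁ h₂) h⟩

end Aux

/-- Extensionality at product types. -/
theorem ext_prod (σ : Sig) (hequiv : ObsEquivariant σ)
    (τ₁ τ₂ : Ty σ.D) (w : Finset Atom) (v₁ v₂ v₁' v₂' : Tm σ)
    (h₁ : IsVal v₁) (h₂ : IsVal v₂) (h₁' : IsVal v₁') (h₂' : IsVal v₂')
    (ha : v₁.atoms ∪ v₂.atoms ∪ v₁'.atoms ∪ v₂'.atoms ⊆ w)
    (ht₁ : HasTy σ [] v₁ τ₁) (ht₂ : HasTy σ [] v₂ τ₂)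
    (ht₁' : HasTy σ [] v₁' τ₁) (ht₂' : HasTy σ [] v₂' τ₂) :
    OpEq σ w (Tm.pair v₁ v₂) (Tm.pair v₁' v₂') (Ty.prod τ₁ τ₂) ↔
      (OpEq σ w v₁ v₁' τ₁ ∧ OpEq σ w v₂ v₂' τ₂) := by
  have hav₁ : v₁.atoms ⊆ w := fun a h => ha (by simp [h])
  have hav₂ : v₂.atoms ⊆ w := fun a h => ha (by simp [h])
  have hav₁' : v₁'.atoms ⊆ w := fun a h => ha (by simp [h])
  have hav₂' : v₂'.atoms ⊆ w := fun a h => ha (by simp [h])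
  constructor
  · rintro ⟨hw, hT, hT', hiff⟩
    refine ⟨⟨?_, ht₁, ht₁', ?_⟩, ⟨?_, ht₂, ht₂', ?_⟩⟩
    · exact Finset.union_subset hav₁ hav₁'
    · intro s S τ' hnd hsub hS
      have hS' : HasTyStk σ [] (Stk.cons S (Tm.fst (Tm.var 0))) (Ty.prod τ₁ τ₂) τ' :=
        HasTyStk.cons (HasTy.fst IsVal.var (HasTy.var _ 0 _ rfl)) hS
      have hsub' : w ∪ (Stk.cons S (Tm.fst (Tm.var 0))).atoms ⊆ s.toFinset := by
        simpa [Stk.atoms, Tm.atoms] using hsub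
      have H := hiff s (Stk.cons S (Tm.fst (Tm.var 0))) τ' hnd hsub' hS'
      have A : Term σ ⟨s, Stk.cons S (Tm.fst (Tm.var 0)), Tm.pair v₁ v₂⟩ ↔
          Term σ ⟨s, S, v₁⟩ := by
        rw [term_pop (IsVal.pair h₁ h₂)]
        exact term_fst h₁ h₂
      have A' : Term σ ⟨s, Stk.cons S (Tm.fst (Tm.var 0)), Tm.pair v₁' v₂'⟩ ↔
          Term σ ⟨s, S, v₁'⟩ := by
        rw [term_pop (IsVal.pair h₁' h₂')]
        exact term_fst h₁' h₂'
      exact A.symm.trans (H.trans A')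
    · exact Finset.union_subset hav₂ hav₂'
    · intro s S τ' hnd hsub hS
      have hS' : HasTyStk σ [] (Stk.cons S (Tm.snd (Tm.var 0))) (Ty.prod τ₁ τ₂) τ' :=
        HasTyStk.cons (HasTy.snd IsVal.var (HasTy.var _ 0 _ rfl)) hS
      have hsub' : w ∪ (Stk.cons S (Tm.snd (Tm.var 0))).atoms ⊆ s.toFinset := by
        simpa [Stk.atoms, Tm.atoms] using hsub
      have H := hiff s (Stk.cons S (Tm.snd (Tm.var 0))) τ' hnd hsub' hS'
      have A : Term σ ⟨s, Stk.cons S (Tm.snd (Tm.var 0)), Tm.pair v₁ v₂⟩ ↔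
          Term σ ⟨s, S, v₂⟩ := by
        rw [term_pop (IsVal.pair h₁ h₂)]
        exact term_snd h₁ h₂
      have A' : Term σ ⟨s, Stk.cons S (Tm.snd (Tm.var 0)), Tm.pair v₁' v₂'⟩ ↔
          Term σ ⟨s, S, v₂'⟩ := by
        rw [term_pop (IsVal.pair h₁' h₂')]
        exact term_snd h₁' h₂'
      exact A.symm.trans (H.trans A')
  · rintro ⟨⟨hw1, _, _, hiff1⟩, ⟨hw2, _, _, hiff2⟩⟩
    refine ⟨?_, HasTy.pair h₁ h₂ ht₁ ht₂, HasTy.pair h₁' h₂' ht₁' ht₂', ?_⟩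
    · intro a hx
      simp only [Tm.atoms, Finset.mem_union] at hx
      rcases hx with (h | h) | (h | h)
      exacts [hav₁ h, hav₂ h, hav₁' h, hav₂' h]
    · intro s S τ' hnd hsub hS
      set rv₂ : Tm σ := v₂.renV Nat.succ with hrv₂
      set rv₁' : Tm σ := v₁'.renV Nat.succ with hrv₁'
      have hty_rv₂ : HasTy σ [τ₁] rv₂ τ₂ :=
        hasTy_renV ht₂ [τ₁] Nat.succ (by intro n τ' h; simp at h)
      have hty_rv₁' : HasTy σ [τ₂] rv₁' τ₁ :=
        hasTy_renV ht₁' [τ₂] Nat.succ (by intro n τ' h; simp at h)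
      have hS₁ : HasTyStk σ [] (Stk.cons S (Tm.pair (Tm.var 0) rv₂)) τ₁ τ' :=
        HasTyStk.cons
          (HasTy.pair IsVal.var (isVal_renV h₂ _) (HasTy.var _ 0 _ rfl) hty_rv₂) hS
      have hS₂ : HasTyStk σ [] (Stk.cons S (Tm.pair rv₁' (Tm.var 0))) τ₂ τ' :=
        HasTyStk.cons
          (HasTy.pair (isVal_renV h₁' _) IsVal.var hty_rv₁' (HasTy.var _ 0 _ rfl)) hS
      have hsub₁ : w ∪ (Stk.cons S (Tm.pair (Tm.var 0) rv₂)).atoms ⊆ s.toFinset := by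
        simp only [Stk.atoms, Tm.atoms, hrv₂, atoms_renV]
        intro a hx
        simp only [Finset.mem_union] at hx
        rcases hx with h | h | h | h
        · exact hsub (by simp [h])
        · exact hsub (by simp [h])
        · simp [Tm.atoms] at h
        · exact hsub (Finset.mem_union_left _ (hav₂ h))
      have hsub₂ : w ∪ (Stk.cons S (Tm.pair rv₁' (Tm.var 0))).atoms ⊆ s.toFinset := by
        simp only [Stk.atoms, Tm.atoms, hrv₁', atoms_renV]
        intro a hx
        simp only [Finset.mem_union] at hx
        rcases hx with h | h | h | h
        · exact hsub (by simp [h])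
        · exact hsub (by simp [h])
        · exact hsub (Finset.mem_union_left _ (hav₁' h))
        · simp [Tm.atoms] at h
      have c1 : ∀ v : Tm σ, (Tm.pair (Tm.var 0) rv₂).subst1 v = Tm.pair v v₂ := by
        intro v
        simp [Tm.subst1, Tm.subst, Tm.cons1, hrv₂, Tm.subst_renV_succ]
      have c2 : ∀ v : Tm σ, (Tm.pair rv₁' (Tm.var 0)).subst1 v = Tm.pair v₁' v := by
        intro v
        simp [Tm.subst1, Tm.subst, Tm.cons1, hrv₁', Tm.subst_renV_succ]
      have A := term_pop (σ := σ) (s := s) (S := S) (e := Tm.pair (Tm.var 0) rv₂) h₁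
      rw [c1 v₁] at A
      have A' := term_pop (σ := σ) (s := s) (S := S) (e := Tm.pair (Tm.var 0) rv₂) h₁'
      rw [c1 v₁'] at A'
      have B := term_pop (σ := σ) (s := s) (S := S) (e := Tm.pair rv₁' (Tm.var 0)) h₂
      rw [c2 v₂] at B
      have B' := term_pop (σ := σ) (s := s) (S := S) (e := Tm.pair rv₁' (Tm.var 0)) h₂'
      rw [c2 v₂'] at B'
      have E1 : Term σ ⟨s, S, Tm.pair v₁ v₂⟩ ↔ Term σ ⟨s, S, Tm.pair v₁' v₂⟩ :=
        A.symm.trans ((hiff1 s _ τ' hnd hsub₁ hS₁).trans A')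
      have E2 : Term σ ⟨s, S, Tm.pair v₁' v₂⟩ ↔ Term σ ⟨s, S, Tm.pair v₁' v₂'⟩ :=
        B.symm.trans ((hiff2 s _ τ' hnd hsub₂ hS₂).trans B')
      exact E1.trans E2
end

section
/- (Extensionality at data types) Let δ be a data type with constructors C₁ : τ₁ → δ, …, Cₙ : τₙ → δ. For all indices j, j' ∈ {1,…,n}, worlds w, and closed values v, v' with atoms in w, ∅ ⊢ v : τ_j and ∅ ⊢ v' : τ_{j'}: ⊢_w C_j v ≅ C_{j'} v' : δ if and only if j = j' and ⊢_w v ≅ v' : τ_j. -/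
set_option autoImplicit true

/-! ## Auxiliary machinery for extensionality at data types -/

section ExtAux

variable {σ : Sig}

/-- A diverging closed expression of any type. -/
def Om (σ : Sig) : Tm σ := .app (.fn (.app (.var 1) (.var 0))) .unit

lemma Om_subst (ρ : ℕ → Tm σ) : (Om σ).subst ρ = Om σ := rfl

lemma Om_subst1 (u : Tm σ) : (Om σ).subst1 u = Om σ := rfl

lemma Om_atoms : (Om σ).atoms = ∅ := by simp [Om, Tm.atoms]

lemma Om_hasTy (Γ : List (Ty σ.D)) (τ : Ty σ.D) : HasTy σ Γ (Om σ) τ :=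
  HasTy.app IsVal.fn IsVal.unit
    (HasTy.fn (HasTy.app IsVal.var IsVal.var (HasTy.var _ 1 (Ty.arrow Ty.unit τ) (by simp))
      (HasTy.var _ 0 Ty.unit (by simp))))
    HasTy.unit

open Classical in
/-- Branch family: constructor `c` goes to `t`, everything else diverges. -/
noncomputable def brV (σ : Sig) (c : σ.C) (t : Tm σ) : σ.C → Tm σ :=
  fun c₀ => if c₀ = c then t else Om σ

lemma brV_self (c : σ.C) (t : Tm σ) : brV σ c t c = t := by simp [brV]

lemma brV_ne {c c₀ : σ.C} (h : c₀ ≠ c) (t : Tm σ) : brV σ c t c₀ = Om σ := by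
  simp [brV, h]

lemma brV_subst (c c₀ : σ.C) (t : Tm σ) (ρ : ℕ → Tm σ) :
    (brV σ c t c₀).subst ρ = brV σ c (t.subst ρ) c₀ := by
  by_cases h : c₀ = c <;> simp [brV, h, Om_subst]

lemma brV_atoms {t : Tm σ} (h : t.atoms = ∅) (c : σ.C) (c₀ : σ.C) :
    (brV σ c t c₀).atoms = ∅ := by
  by_cases hc : c₀ = c <;> simp [brV, hc, h, Om_atoms]

lemma caseV_atoms {t : Tm σ} (c : σ.C) (h : t.atoms = ∅) :
    (Tm.case (Tm.var 0) (brV σ c t)).atoms = ∅ := by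
  ext a
  simp [Tm.atoms, brV_atoms h c]

lemma brV_hasTy {Γ : List (Ty σ.D)} {τ : Ty σ.D} {δ' : σ.D} (c : σ.C) {t : Tm σ}
    (h : HasTy σ (σ.argTy c :: Γ) t τ) :
    ∀ c₀, σ.resTy c₀ = δ' → HasTy σ (σ.argTy c₀ :: Γ) (brV σ c t c₀) τ := by
  intro c₀ _
  by_cases hcc : c₀ = c
  · subst hcc; rw [brV_self]; exact h
  · rw [brV_ne hcc]; exact Om_hasTy _ _

/-! ### Deterministic inversion of steps -/

lemma step_pop_det {s : List Atom} {S : Stk σ} {e v : Tm σ} {c₂ : Config σ}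
    (hv : IsVal v) (h : Step σ ⟨s, Stk.cons S e, v⟩ c₂) : c₂ = ⟨s, S, e.subst1 v⟩ := by
  cases h with
  | pop => rfl
  | lett => cases hv
  | case => cases hv
  | fst => cases hv
  | snd => cases hv
  | app => cases hv
  | fresh => cases hv
  | unbind => cases hv
  | obs => cases hv

lemma step_case_det {s : List Atom} {S : Stk σ} {c : σ.C} {v : Tm σ}
    {br : σ.C → Tm σ} {c₂ : Config σ}
    (h : Step σ ⟨s, S, Tm.case (Tm.con c v) br⟩ c₂) :
    c₂ = ⟨s, S, (br c).subst1 v⟩ := by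
  cases h with
  | pop hv => cases hv
  | case => rfl

lemma step_app_det {s : List Atom} {S : Stk σ} {e v : Tm σ} {c₂ : Config σ}
    (h : Step σ ⟨s, S, Tm.app (Tm.fn e) v⟩ c₂) :
    c₂ = ⟨s, S, e.subst2 v (Tm.fn e)⟩ := by
  cases h with
  | pop hv => cases hv
  | app => rfl

/-! ### Termination lemmas -/

lemma Om_nontermN : ∀ (n : ℕ) (s : List Atom) (S : Stk σ), ¬ TermN σ ⟨s, S, Om σ⟩ n := by
  intro n
  induction n with
  | zero =>
    intro s S h
    cases h with
    | val hval => cases hval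
  | succ n ih =>
    intro s S h
    cases h with
    | step hst ht =>
      rw [show (Om σ) = Tm.app (Tm.fn (Tm.app (Tm.var 1) (Tm.var 0))) Tm.unit from rfl]
        at hst
      rw [step_app_det hst] at ht
      exact ih s S ht

lemma Om_nonterm {s : List Atom} {S : Stk σ} : ¬ Term σ ⟨s, S, Om σ⟩ :=
  fun ⟨n, h⟩ => Om_nontermN n s S h

lemma term_case {s : List Atom} {S : Stk σ} {c : σ.C} {v : Tm σ} {br : σ.C → Tm σ}
    (hv : IsVal v) :
    Term σ ⟨s, S, Tm.case (Tm.con c v) br⟩ ↔ Term σ ⟨s, S, (br c).subst1 v⟩ := by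
  constructor
  · rintro ⟨n, h⟩
    cases h with
    | val hval => cases hval
    | step hst ht => exact ⟨_, (step_case_det hst) ▸ ht⟩
  · rintro ⟨n, h⟩
    exact ⟨n + 1, TermN.step (Step.case br hv) h⟩

lemma case_subst1 (br : σ.C → Tm σ) (u : Tm σ) :
    (Tm.case (Tm.var 0) br).subst1 u
      = Tm.case u (fun c₀ => (br c₀).subst (Tm.ups (Tm.cons1 u))) := rfl

lemma term_gadget {s : List Atom} {S : Stk σ} {v : Tm σ} (c c₁ : σ.C) (t : Tm σ)
    (hv : IsVal v) :
    Term σ ⟨s, Stk.cons S (Tm.case (Tm.var 0) (brV σ c t)), Tm.con c₁ v⟩ ↔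
    Term σ ⟨s, S, (brV σ c (t.subst (Tm.ups (Tm.cons1 (Tm.con c₁ v)))) c₁).subst1 v⟩ := by
  rw [term_pop (IsVal.con hv)]
  have heq : (Tm.case (Tm.var 0) (brV σ c t)).subst1 (Tm.con c₁ v)
      = Tm.case (Tm.con c₁ v) (brV σ c (t.subst (Tm.ups (Tm.cons1 (Tm.con c₁ v))))) := by
    rw [case_subst1]
    congr 1
    funext c₀
    exact brV_subst c c₀ t _
  rw [heq, term_case hv]

lemma gadget_extract {s : List Atom} {S : Stk σ} {v : Tm σ} (c : σ.C) (hv : IsVal v) :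
    Term σ ⟨s, Stk.cons S (Tm.case (Tm.var 0) (brV σ c (Tm.var 0))), Tm.con c v⟩ ↔
    Term σ ⟨s, S, v⟩ := by
  rw [term_gadget c c (Tm.var 0) hv,
    show (Tm.var 0 : Tm σ).subst (Tm.ups (Tm.cons1 (Tm.con c v))) = Tm.var 0 from rfl,
    brV_self, show (Tm.var 0 : Tm σ).subst1 v = v from rfl]

lemma gadget_con {s : List Atom} {S : Stk σ} {v : Tm σ} (c : σ.C) (hv : IsVal v) :
    Term σ ⟨s, Stk.cons S (Tm.con c (Tm.var 0)), v⟩ ↔ Term σ ⟨s, S, Tm.con c v⟩ := by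
  rw [term_pop hv]; exact Iff.rfl

end ExtAux

/-- Extensionality at data types. -/
theorem ext_data (σ : Sig) (hequiv : ObsEquivariant σ)
    (δ : σ.D) (c c' : σ.C) (hc : σ.resTy c = δ) (hc' : σ.resTy c' = δ)
    (w : Finset Atom) (v v' : Tm σ) (hv : IsVal v) (hv' : IsVal v')
    (ha : v.atoms ∪ v'.atoms ⊆ w)
    (ht : HasTy σ [] v (σ.argTy c)) (ht' : HasTy σ [] v' (σ.argTy c')) :
    OpEq σ w (Tm.con c v) (Tm.con c' v') (Ty.data δ) ↔
      (c = c' ∧ OpEq σ w v v' (σ.argTy c)) := by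
  constructor
  · rintro ⟨hat, hty, hty', hterm⟩
    -- First, show the constructors are equal.
    have hcc : c = c' := by
      by_contra hne
      have hcase : HasTy σ [Ty.data δ] (Tm.case (Tm.var 0) (brV σ c Tm.unit)) Ty.unit :=
        HasTy.case _ IsVal.var (HasTy.var _ 0 (Ty.data δ) (by simp)) (brV_hasTy c HasTy.unit)
      have hsubT : w ∪ (Stk.cons Stk.id (Tm.case (Tm.var 0) (brV σ c Tm.unit))).atoms
          ⊆ w.toList.toFinset := by
        simp [Stk.atoms, caseV_atoms c (show (Tm.unit : Tm σ).atoms = ∅ from rfl)]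
      have h := hterm w.toList
        (Stk.cons Stk.id (Tm.case (Tm.var 0) (brV σ c Tm.unit))) Ty.unit
        w.nodup_toList hsubT (HasTyStk.cons hcase HasTyStk.id)
      have h1 : Term σ ⟨w.toList,
          Stk.cons Stk.id (Tm.case (Tm.var 0) (brV σ c Tm.unit)), Tm.con c v⟩ := by
        rw [term_gadget c c Tm.unit hv,
          show Tm.unit.subst (Tm.ups (Tm.cons1 (Tm.con c v))) = (Tm.unit : Tm σ) from rfl,
          brV_self]
        exact ⟨0, TermN.val IsVal.unit⟩
      have h2 := h.mp h1
      rw [term_gadget c c' Tm.unit hv',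
        show Tm.unit.subst (Tm.ups (Tm.cons1 (Tm.con c' v'))) = (Tm.unit : Tm σ) from rfl,
        brV_ne (Ne.symm hne), Om_subst1] at h2
      exact Om_nonterm h2
    subst hcc
    refine ⟨rfl, ha, ht, ht', ?_⟩
    intro s S τ' hnd hsub hS
    have hcase : HasTy σ [Ty.data δ] (Tm.case (Tm.var 0) (brV σ c (Tm.var 0)))
        (σ.argTy c) :=
      HasTy.case _ IsVal.var (HasTy.var _ 0 (Ty.data δ) (by simp))
        (brV_hasTy c (HasTy.var _ 0 (σ.argTy c) (by simp)))
    have hsub' : w ∪ (Stk.cons S (Tm.case (Tm.var 0) (brV σ c (Tm.var 0)))).atoms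
        ⊆ s.toFinset := by
      have h0 : (Tm.case (Tm.var 0) (brV σ c (Tm.var 0))).atoms = ∅ := caseV_atoms c rfl
      simp only [Stk.atoms, h0, Finset.union_empty]
      exact hsub
    have h := hterm s (Stk.cons S (Tm.case (Tm.var 0) (brV σ c (Tm.var 0)))) τ'
      hnd hsub' (HasTyStk.cons hcase hS)
    rw [gadget_extract c hv, gadget_extract c hv'] at h
    exact h
  · rintro ⟨rfl, haOp, htOp, htOp', hterm⟩
    refine ⟨by simpa [Tm.atoms] using ha, ?_, ?_, ?_⟩
    · rw [← hc]; exact HasTy.con hv ht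
    · rw [← hc]; exact HasTy.con hv' ht'
    · intro s S τ' hnd hsub hS
      have hcon : HasTy σ [σ.argTy c] (Tm.con c (Tm.var 0)) (Ty.data δ) := by
        rw [← hc]; exact HasTy.con IsVal.var (HasTy.var _ 0 (σ.argTy c) (by simp))
      have hsub' : w ∪ (Stk.cons S (Tm.con c (Tm.var 0))).atoms ⊆ s.toFinset := by
        simp only [Stk.atoms,
          show (Tm.con c (Tm.var 0) : Tm σ).atoms = ∅ from rfl, Finset.union_empty]
        exact hsub
      have h := hterm s (Stk.cons S (Tm.con c (Tm.var 0))) τ' hnd hsub'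
        (HasTyStk.cons hcon hS)
      rw [gadget_con c hv, gadget_con c hv'] at h
      exact h
end

section
/- (Extensionality at the type of atoms) For all atoms a, a' and worlds w with a, a' ∈ w: ⊢_w a ≅ a' : atm if and only if a = a'. -/
set_option autoImplicit true

/-! ## Auxiliary material for the extensionality theorem -/

open scoped Classical

namespace ExtAtmAux

variable {σ : Sig}

/-- The diverging term Ω = (fun f x = f x) (). -/
def Omega (σ : Sig) : Tm σ :=
  Tm.app (Tm.fn (Tm.app (Tm.var 1) (Tm.var 0))) Tm.unit

/-- Arguments for the `eq` observation. -/
def eArgs (σ : Sig) (t u : Tm σ) : Fin (σ.arity σ.eqO) → Tm σ :=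
  fun i => if (i : ℕ) = 0 then t else u

/-- Branches: terminate on Zero, diverge otherwise. -/
noncomputable def brs (σ : Sig) : σ.C → Tm σ :=
  fun c => if c = σ.zeroC then Tm.unit else Omega σ

noncomputable def Body (σ : Sig) : Tm σ := Tm.case (Tm.var 0) (brs σ)

noncomputable def eTest (σ : Sig) (a' : Atom) : Tm σ :=
  Tm.lett (Tm.obs σ.eqO (eArgs σ (Tm.var 0) (Tm.atom a'))) (Body σ)

lemma subst_brs (c : σ.C) (ρ : ℕ → Tm σ) : Tm.subst (brs σ c) ρ = brs σ c := by
  unfold brs; split <;> rfl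

lemma subst1_eTest (a' b : Atom) :
    Tm.subst1 (eTest σ a') (Tm.atom b) =
      Tm.lett (Tm.obs σ.eqO (eArgs σ (Tm.atom b) (Tm.atom a'))) (Body σ) := by
  unfold eTest Body
  simp only [Tm.subst1, Tm.subst]
  refine congrArg₂ Tm.lett (congrArg _ (funext fun i => ?_))
    (congrArg₂ Tm.case rfl (funext fun c => ?_))
  · unfold eArgs; split <;> rfl
  · exact subst_brs c _

lemma subst1_Body (v : Tm σ) : Tm.subst1 (Body σ) v = Tm.case v (brs σ) := by
  unfold Body
  simp only [Tm.subst1, Tm.subst]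
  exact congrArg₂ Tm.case rfl (funext fun c => subst_brs c _)

lemma obs_eArgs (b c : Atom) :
    Tm.obs σ.eqO (eArgs σ (Tm.atom b) (Tm.atom c)) =
      Tm.obs σ.eqO (fun i => Tm.atom (if (i : ℕ) = 0 then b else c)) := by
  refine congrArg _ (funext fun i => ?_)
  unfold eArgs; split <;> rfl

lemma ofFn_two (b c : Atom) (f : Fin (σ.arity σ.eqO) → Atom)
    (hf : ∀ i, f i = if (i : ℕ) = 0 then b else c) :
    List.ofFn f = [b, c] := by
  have key : ∀ n (_ : n = 2) (g : Fin n → Atom),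
      (∀ i, g i = if (i : ℕ) = 0 then b else c) → List.ofFn g = [b, c] := by
    rintro n rfl g hg
    simp [List.ofFn_succ, hg]
  exact key _ σ.eqArity f hf

lemma succ_ne_zero : σ.succC ≠ σ.zeroC := by
  intro h
  have h1 := σ.succArg
  rw [h, σ.zeroArg] at h1
  cases h1

lemma hasTy_Omega (Γ : List (Ty σ.D)) : HasTy σ Γ (Omega σ) Ty.unit := by
  refine HasTy.app IsVal.fn IsVal.unit (HasTy.fn ?_) HasTy.unit
  exact HasTy.app IsVal.var IsVal.var
    (HasTy.var _ 1 (Ty.arrow Ty.unit Ty.unit) (by simp)) (HasTy.var _ 0 Ty.unit (by simp))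

lemma hasTy_brs (c : σ.C) (Γ : List (Ty σ.D)) : HasTy σ Γ (brs σ c) Ty.unit := by
  unfold brs; split
  · exact HasTy.unit
  · exact hasTy_Omega Γ

lemma hasTy_eTest (a' : Atom) : HasTy σ [Ty.atm] (eTest σ a') Ty.unit := by
  refine HasTy.lett (HasTy.obs σ.eqO _ (fun i => ?_) (fun i => ?_)) ?_
  · unfold eArgs; split
    · exact IsVal.var
    · exact IsVal.atom
  · unfold eArgs; split
    · exact HasTy.var _ 0 _ rfl
    · exact HasTy.atom
  · refine HasTy.case (brs σ) IsVal.var (HasTy.var _ 0 _ rfl) ?_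
    intro c _
    exact hasTy_brs c _

lemma atoms_brs (c : σ.C) : (brs σ c).atoms = ∅ := by
  unfold brs; split <;> rfl

lemma atoms_eTest (a' : Atom) : (eTest σ a').atoms ⊆ {a'} := by
  unfold eTest Body eArgs
  intro x hx
  simp only [Tm.atoms, atoms_brs, apply_ite Tm.atoms, Finset.mem_union,
    Finset.mem_biUnion, Finset.mem_univ, true_and, Finset.notMem_empty,
    or_false, false_or, exists_const, exists_false] at hx
  rcases hx with ⟨i, hi⟩
  split at hi
  · simp at hi
  · simpa using hi

lemma omega_div (n : ℕ) : ∀ s S, ¬ TermN σ ⟨s, S, Omega σ⟩ n := by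
  induction n with
  | zero =>
    intro s S h
    cases h with
    | val hv => cases hv
  | succ n ih =>
    intro s S h
    cases h with
    | step hs ht =>
      cases hs with
      | pop hv => cases hv
      | app hv => exact ih _ _ ht

lemma term_pos (a' : Atom) (s : List Atom) (hs : a' ∈ s) :
    Term σ ⟨s, Stk.cons Stk.id (eTest σ a'), Tm.atom a'⟩ := by
  refine ⟨5, ?_⟩
  refine TermN.step (Step.pop IsVal.atom) ?_
  rw [subst1_eTest]
  refine TermN.step Step.lett ?_
  rw [obs_eArgs]
  refine TermN.step (Step.obs σ.eqO (fun i => if (i : ℕ) = 0 then a' else a')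
    (fun i => by simpa using hs)) ?_
  rw [ofFn_two a' a' _ (fun i => rfl), σ.eqSem, if_pos rfl]
  show TermN σ ⟨s, Stk.cons Stk.id (Body σ), Tm.con σ.zeroC Tm.unit⟩ 2
  refine TermN.step (Step.pop (IsVal.con IsVal.unit)) ?_
  rw [subst1_Body]
  refine TermN.step (Step.case (brs σ) IsVal.unit) ?_
  have hb : brs σ σ.zeroC = Tm.unit := if_pos rfl
  rw [hb]
  exact TermN.val IsVal.unit

lemma term_neg (a a' : Atom) (hne : a ≠ a') (s : List Atom)
    (hs : a ∈ s) (hs' : a' ∈ s) :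
    ¬ Term σ ⟨s, Stk.cons Stk.id (eTest σ a'), Tm.atom a⟩ := by
  rintro ⟨n, h⟩
  cases h with
  | step hs1 ht1 =>
  cases hs1 with
  | pop hv =>
  rw [subst1_eTest] at ht1
  cases ht1 with
  | val hv => cases hv
  | step hs2 ht2 =>
  cases hs2 with
  | lett =>
  generalize hF : eArgs σ (Tm.atom a) (Tm.atom a') = F at ht2
  cases ht2 with
  | step hs3 ht3 =>
  cases hs3 with
  | pop hv => cases hv
  | obs o as hmem =>
    have has : ∀ i, as i = if (i : ℕ) = 0 then a else a' := by
      intro i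
      have hfi := congrFun hF i
      unfold eArgs at hfi
      by_cases h : (i : ℕ) = 0
      · rw [if_pos h]; rw [if_pos h] at hfi; exact (Tm.atom.inj hfi).symm
      · rw [if_neg h]; rw [if_neg h] at hfi; exact (Tm.atom.inj hfi).symm
    have hval : σ.obsVal σ.eqO s (List.ofFn as) = 1 := by
      rw [ofFn_two a a' as has, σ.eqSem, if_neg hne]
    rw [hval] at ht3
    cases ht3 with
    | step hs4 ht4 =>
    cases hs4 with
    | pop hv =>
    rw [subst1_Body] at ht4
    cases ht4 with
    | val hv => cases hv
    | step hs5 ht5 =>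
    cases hs5 with
    | case br hv =>
    have hb : brs σ σ.succC = Omega σ := if_neg succ_ne_zero
    rw [hb] at ht5
    have homega : Tm.subst1 (Omega σ) (numeral σ 0) = Omega σ := rfl
    rw [homega] at ht5
    exact omega_div _ _ _ ht5

end ExtAtmAux

open ExtAtmAux in
/-- Extensionality at the type of atoms. -/
theorem ext_atm (σ : Sig) (hequiv : ObsEquivariant σ)
    (a a' : Atom) (w : Finset Atom) (ha : a ∈ w) (ha' : a' ∈ w) :
    OpEq σ w (Tm.atom a) (Tm.atom a') Ty.atm ↔ a = a' := by
  constructor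
  · intro hop
    by_contra hne
    obtain ⟨hatoms, _, _, hiff⟩ := hop
    have hnodup : w.toList.Nodup := w.nodup_toList
    have hts : w.toList.toFinset = w := w.toList_toFinset
    have hsubs : w ∪ (Stk.cons Stk.id (eTest σ a')).atoms ⊆ w.toList.toFinset := by
      rw [hts]
      apply Finset.union_subset (le_refl w)
      show Stk.atoms _ ∪ _ ⊆ w
      refine Finset.union_subset (by simp [Stk.atoms]) ?_
      exact (atoms_eTest a').trans (Finset.singleton_subset_iff.2 ha')
    have hstk : HasTyStk σ [] (Stk.cons Stk.id (eTest σ a')) Ty.atm Ty.unit :=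
      HasTyStk.cons (hasTy_eTest a') HasTyStk.id
    have h := hiff w.toList (Stk.cons Stk.id (eTest σ a')) Ty.unit hnodup hsubs hstk
    have hmem : a ∈ w.toList := (Finset.mem_toList).2 ha
    have hmem' : a' ∈ w.toList := (Finset.mem_toList).2 ha'
    exact term_neg a a' hne w.toList hmem hmem' (h.2 (term_pos a' w.toList hmem'))
  · rintro rfl
    exact ⟨by simp [Tm.atoms, ha], HasTy.atom, HasTy.atom,
      fun _ _ _ _ _ _ => Iff.rfl⟩
end

section
/- (Value property of the Howe relation) If Γ ⊢_w v ≅* e'' : τ where v is a value, then there exists a value v' such that Γ ⊢_w v ≅* v' : τ and Γ ⊢_w v' ≅° e'' : τ. -/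
set_option autoImplicit true

section Aux

variable {σ : Sig}

/-- Compatible refinement is monotone. -/
lemma compRef_mono {R R' : ExprRel σ} (hRR : ∀ Γ w e e' τ, R Γ w e e' τ → R' Γ w e e' τ)
    {Γ w e e' τ} (h : CompRef σ R Γ w e e' τ) : CompRef σ R' Γ w e e' τ := by
  induction h with
  | var Γ n τ hn => exact CompRef.var Γ n τ hn
  | unit => exact CompRef.unit
  | pair h1 h2 h3 h4 h5 h6 =>
    exact CompRef.pair h1 h2 h3 h4 (hRR _ _ _ _ _ h5) (hRR _ _ _ _ _ h6)
  | fn h => exact CompRef.fn (hRR _ _ _ _ _ h)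
  | con h1 h2 h3 => exact CompRef.con h1 h2 (hRR _ _ _ _ _ h3)
  | atom h => exact CompRef.atom h
  | bindv h1 h2 h3 h4 h5 h6 =>
    exact CompRef.bindv h1 h2 h3 h4 (hRR _ _ _ _ _ h5) (hRR _ _ _ _ _ h6)
  | lett h1 h2 => exact CompRef.lett (hRR _ _ _ _ _ h1) (hRR _ _ _ _ _ h2)
  | fst h1 h2 h3 => exact CompRef.fst h1 h2 (hRR _ _ _ _ _ h3)
  | snd h1 h2 h3 => exact CompRef.snd h1 h2 (hRR _ _ _ _ _ h3)
  | app h1 h2 h3 h4 h5 h6 =>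
    exact CompRef.app h1 h2 h3 h4 (hRR _ _ _ _ _ h5) (hRR _ _ _ _ _ h6)
  | case br br' h1 h2 h3 h4 =>
    exact CompRef.case br br' h1 h2 (hRR _ _ _ _ _ h3)
      (fun c hc => hRR _ _ _ _ _ (h4 c hc))
  | fresh => exact CompRef.fresh
  | unbind h1 h2 h3 => exact CompRef.unbind h1 h2 (hRR _ _ _ _ _ h3)
  | obs o args args' h1 h2 h3 =>
    exact CompRef.obs o args args' h1 h2 (fun i => hRR _ _ _ _ _ (h3 i))

/-- Compatible refinement preserves valueness left-to-right. -/
lemma compRef_isVal {R : ExprRel σ} {Γ w e e' τ}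
    (h : CompRef σ R Γ w e e' τ) (hv : IsVal e) : IsVal e' := by
  cases h with
  | var => exact IsVal.var
  | unit => exact IsVal.unit
  | pair h1 h2 h3 h4 _ _ => exact IsVal.pair h3 h4
  | fn => exact IsVal.fn
  | con h1 h2 _ => exact IsVal.con h2
  | atom => exact IsVal.atom
  | bindv h1 h2 h3 h4 _ _ => exact IsVal.bindv h3 h4
  | lett => cases hv
  | fst => cases hv
  | snd => cases hv
  | app => cases hv
  | case => cases hv
  | fresh => cases hv
  | unbind => cases hv
  | obs => cases hv

/-- From `CtxEq b c` we can extract `CtxEq b b`. -/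
lemma ctxEq_left_refl {Γ : List (Ty σ.D)} {w : Finset Atom} {b c : Tm σ} {τ}
    (h : CtxEq σ Γ w b c τ) : CtxEq σ Γ w b b τ := by
  obtain ⟨hat, ht1, ht2, hop⟩ := h
  refine ⟨?_, ht1, ht1, ?_⟩
  · exact Finset.union_subset
      ((Finset.subset_union_left).trans hat) ((Finset.subset_union_left).trans hat)
  · intro w' vs hw hvs
    obtain ⟨oa, ot1, ot2, oiff⟩ := hop w' vs hw hvs
    refine ⟨?_, ot1, ot1, fun _ _ _ _ _ _ => Iff.rfl⟩
    exact Finset.union_subset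
      ((Finset.subset_union_left).trans oa) ((Finset.subset_union_left).trans oa)

/-- Howe is itself closed under the Howe rule. -/
lemma howe_closed {Γ : List (Ty σ.D)} {w : Finset Atom} {a b c : Tm σ} {τ}
    (h1 : CompRef σ (Howe σ) Γ w a b τ) (h2 : CtxEq σ Γ w b c τ) :
    Howe σ Γ w a c τ := by
  intro R hR
  exact hR Γ w a c τ ⟨b, compRef_mono (fun Γ' w' e e' τ' he => he R hR) h1, h2⟩

end Aux
/-- Value property of the Howe relation. -/
theorem howe_value (σ : Sig) (hequiv : ObsEquivariant σ)
    (Γ : List (Ty σ.D)) (w : Finset Atom) (v e'' : Tm σ) (τ : Ty σ.D)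
    (hv : IsVal v) (h : Howe σ Γ w v e'' τ) :
    ∃ v' : Tm σ, IsVal v' ∧ Howe σ Γ w v v' τ ∧ CtxEq σ Γ w v' e'' τ := by
  classical
  -- The auxiliary relation recording the value property.
  set P : ExprRel σ := fun Γ' w' e c τ' =>
    Howe σ Γ' w' e c τ' ∧
      (IsVal e → ∃ v' : Tm σ, IsVal v' ∧ Howe σ Γ' w' e v' τ' ∧ CtxEq σ Γ' w' v' c τ')
    with hP
  have hPle : ∀ Γ' w' e c τ', P Γ' w' e c τ' → Howe σ Γ' w' e c τ' :=
    fun _ _ _ _ _ h => h.1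
  have hPclosed : ∀ Γ' w' a c τ',
      (∃ b, CompRef σ P Γ' w' a b τ' ∧ CtxEq σ Γ' w' b c τ') → P Γ' w' a c τ' := by
    rintro Γ' w' a c τ' ⟨b, hab, hbc⟩
    have habH : CompRef σ (Howe σ) Γ' w' a b τ' := compRef_mono hPle hab
    constructor
    · exact howe_closed habH hbc
    · intro hva
      refine ⟨b, compRef_isVal hab hva, ?_, hbc⟩
      exact howe_closed habH (ctxEq_left_refl hbc)
  exact (h P hPclosed).2 hv
end
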